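/- arXiv:2404.17112 — 2 statements merged into one kernel-verified Lean document; each statement's English description precedes it below -/
import Mathlib

section
/- Let Ω = (0,L) × (0,1). For u, ū ∈ H¹(Ω) vanishing at y = 0,1 and periodic in x, and ρ, ρ̄ ∈ L²(Ω), the product estimate ∫_Ω |ρ − ρ̄| · |∫₀^y ∂_x u(x,s) ds| · |∂_y u| · |ū − u| dx dy ≤ C ‖ρ − ρ̄‖_{L²} ‖u‖_{H²}² ‖∇(ū − u)‖_{L²} holds with C depending only on Ω, provided u ∈ H²(Ω). -/
open MeasureTheory Set intervalIntegral
open scoped Interval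

/-- The strip `Ω = (0,L) × (0,1)`. -/
noncomputable def dom (L : ℝ) : Set (ℝ × ℝ) := Set.Ioo 0 L ×ˢ Set.Ioo (0:ℝ) 1

/-- The `H^k(Ω)` norm of `f` on the strip `Ω = (0,L) × (0,1)`. -/
noncomputable def sobNorm (k : ℕ) (L : ℝ) (f : ℝ × ℝ → ℝ) : ℝ :=
  Real.sqrt (∑ i ∈ Finset.range (k + 1), ∫ p in dom L, ‖iteratedFDeriv ℝ i f p‖ ^ 2)

namespace S14


lemma hasDerivAt_fst {f : ℝ × ℝ → ℝ} (hf : Differentiable ℝ f) (x y : ℝ) :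
    HasDerivAt (fun t => f (t, y)) (fderiv ℝ f (x, y) (1, 0)) x := by
  have h1 : HasDerivAt (fun t : ℝ => (t, y)) ((1:ℝ), (0:ℝ)) x :=
    (hasDerivAt_id x).prodMk (hasDerivAt_const x y)
  simpa [Function.comp_def] using ((hf (x, y)).hasFDerivAt.comp_hasDerivAt x h1)

lemma hasDerivAt_snd {f : ℝ × ℝ → ℝ} (hf : Differentiable ℝ f) (x y : ℝ) :
    HasDerivAt (fun s => f (x, s)) (fderiv ℝ f (x, y) (0, 1)) y := by
  have h1 : HasDerivAt (fun s : ℝ => (x, s)) ((0:ℝ), (1:ℝ)) y :=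
    (hasDerivAt_const y x).prodMk (hasDerivAt_id y)
  simpa [Function.comp_def] using ((hf (x, y)).hasFDerivAt.comp_hasDerivAt y h1)

lemma norm_e1 : ‖((1:ℝ), (0:ℝ))‖ = 1 := by simp [Prod.norm_def]
lemma norm_e2 : ‖((0:ℝ), (1:ℝ))‖ = 1 := by simp [Prod.norm_def]

lemma abs_fderiv_le (f : ℝ × ℝ → ℝ) (p v : ℝ × ℝ) (hv : ‖v‖ ≤ 1) :
    |fderiv ℝ f p v| ≤ ‖iteratedFDeriv ℝ 1 f p‖ := by
  have h : fderiv ℝ f p v = iteratedFDeriv ℝ 1 f p ![v] := by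
    rw [iteratedFDeriv_one_apply]; simp
  rw [← Real.norm_eq_abs, h]
  calc ‖iteratedFDeriv ℝ 1 f p ![v]‖ ≤ ‖iteratedFDeriv ℝ 1 f p‖ * ∏ i : Fin 1, ‖(![v] : Fin 1 → ℝ × ℝ) i‖ :=
        (iteratedFDeriv ℝ 1 f p).le_opNorm _
    _ ≤ ‖iteratedFDeriv ℝ 1 f p‖ * 1 := by
        refine mul_le_mul_of_nonneg_left ?_ (norm_nonneg _)
        simpa using hv
    _ = _ := mul_one _

lemma contDiff_fderiv_apply {u : ℝ × ℝ → ℝ} (hu : ContDiff ℝ 2 u) (v : ℝ × ℝ) :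
    ContDiff ℝ 1 (fun p => fderiv ℝ u p v) :=
  (hu.fderiv_right (by norm_num)).clm_apply contDiff_const

lemma fderiv_fderiv_apply {u : ℝ × ℝ → ℝ} (hu : ContDiff ℝ 2 u) (v w p : ℝ × ℝ) :
    fderiv ℝ (fun q => fderiv ℝ u q v) p w = iteratedFDeriv ℝ 2 u p ![w, v] := by
  have hdu : DifferentiableAt ℝ (fderiv ℝ u) p :=
    ((hu.fderiv_right (m := 1) (by norm_num)).differentiable one_ne_zero) p
  have h := fderiv_clm_apply hdu (differentiableAt_const v)
  rw [iteratedFDeriv_two_apply]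
  simp only [h]
  simp [Matrix.cons_val_zero, Matrix.cons_val_one]

lemma abs_fderiv_fderiv_le {u : ℝ × ℝ → ℝ} (hu : ContDiff ℝ 2 u) (v w p : ℝ × ℝ)
    (hv : ‖v‖ ≤ 1) (hw : ‖w‖ ≤ 1) :
    |fderiv ℝ (fun q => fderiv ℝ u q v) p w| ≤ ‖iteratedFDeriv ℝ 2 u p‖ := by
  rw [← Real.norm_eq_abs, fderiv_fderiv_apply hu]
  calc ‖iteratedFDeriv ℝ 2 u p ![w, v]‖
      ≤ ‖iteratedFDeriv ℝ 2 u p‖ * ∏ i : Fin 2, ‖(![w, v] : Fin 2 → ℝ × ℝ) i‖ :=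
        (iteratedFDeriv ℝ 2 u p).le_opNorm _
    _ ≤ ‖iteratedFDeriv ℝ 2 u p‖ * 1 := by
        refine mul_le_mul_of_nonneg_left ?_ (norm_nonneg _)
        rw [Fin.prod_univ_two]
        simpa using mul_le_one₀ hw (norm_nonneg _) hv
    _ = _ := mul_one _



lemma integrableOn_dom {L : ℝ} {F : ℝ × ℝ → ℝ} (hF : Continuous F) :
    IntegrableOn F (dom L) := by
  have hK : IsCompact (Icc (0:ℝ) L ×ˢ Icc (0:ℝ) 1) := isCompact_Icc.prod isCompact_Icc
  exact (hF.continuousOn.integrableOn_compact hK).mono_set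
    (Set.prod_mono Ioo_subset_Icc_self Ioo_subset_Icc_self)

lemma fub {L : ℝ} (F : ℝ × ℝ → ℝ) (hF : Continuous F) :
    ∫ p in dom L, F p = ∫ x in Ioo (0:ℝ) L, ∫ y in Ioo (0:ℝ) 1, F (x, y) := by
  have h : IntegrableOn F (dom L) := integrableOn_dom hF
  rw [dom, Measure.volume_eq_prod] at h ⊢
  exact setIntegral_prod F h

lemma fub_symm {L : ℝ} (F : ℝ × ℝ → ℝ) (hF : Continuous F) :
    ∫ p in dom L, F p = ∫ y in Ioo (0:ℝ) 1, ∫ x in Ioo (0:ℝ) L, F (x, y) := by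
  have h : IntegrableOn F (dom L) := integrableOn_dom hF
  rw [dom, Measure.volume_eq_prod] at h ⊢
  rw [← Measure.prod_restrict]
  exact integral_prod_symm F (by rwa [Measure.prod_restrict])

lemma cauchy_schwarz {α : Type*} [MeasurableSpace α] (μ : Measure α) {f g : α → ℝ}
    (hfm : AEStronglyMeasurable f μ) (hgm : AEStronglyMeasurable g μ)
    (hf2 : Integrable (fun a => f a ^ 2) μ) (hg2 : Integrable (fun a => g a ^ 2) μ)
    (hf0 : 0 ≤ᵐ[μ] f) (hg0 : 0 ≤ᵐ[μ] g) :
    ∫ a, f a * g a ∂μ ≤ Real.sqrt (∫ a, f a ^ 2 ∂μ) * Real.sqrt (∫ a, g a ^ 2 ∂μ) := by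
  have hpq : Real.HolderConjugate 2 2 := ⟨by norm_num, by norm_num, by norm_num⟩
  have hf : MemLp f (ENNReal.ofReal 2) μ := by
    rw [(by norm_num : ENNReal.ofReal 2 = 2)]
    exact (memLp_two_iff_integrable_sq hfm).2 hf2
  have hg : MemLp g (ENNReal.ofReal 2) μ := by
    rw [(by norm_num : ENNReal.ofReal 2 = 2)]
    exact (memLp_two_iff_integrable_sq hgm).2 hg2
  have h := integral_mul_le_Lp_mul_Lq_of_nonneg hpq hf0 hg0 hf hg
  have e1 : ∫ a, f a ^ (2:ℝ) ∂μ = ∫ a, f a ^ (2:ℕ) ∂μ := by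
    refine integral_congr_ae (Filter.Eventually.of_forall fun a => ?_)
    show f a ^ (2:ℝ) = f a ^ (2:ℕ)
    rw [show ((2:ℝ)) = ((2:ℕ):ℝ) by norm_num, Real.rpow_natCast]
  have e2 : ∫ a, g a ^ (2:ℝ) ∂μ = ∫ a, g a ^ (2:ℕ) ∂μ := by
    refine integral_congr_ae (Filter.Eventually.of_forall fun a => ?_)
    show g a ^ (2:ℝ) = g a ^ (2:ℕ)
    rw [show ((2:ℝ)) = ((2:ℕ):ℝ) by norm_num, Real.rpow_natCast]
  rw [e1, e2] at h
  calc ∫ a, f a * g a ∂μ ≤ (∫ a, f a ^ 2 ∂μ) ^ (1/(2:ℝ)) * (∫ a, g a ^ 2 ∂μ) ^ (1/(2:ℝ)) := h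
    _ = _ := by
        rw [← Real.sqrt_eq_rpow, ← Real.sqrt_eq_rpow]

lemma ftc_vertical {f : ℝ × ℝ → ℝ} (hf : ContDiff ℝ 1 f) (h0 : ∀ x, f (x, 0) = 0) (x y : ℝ) :
    f (x, y) = ∫ s in (0:ℝ)..y, fderiv ℝ f (x, s) (0, 1) := by
  have hd : ∀ s ∈ uIcc (0:ℝ) y, HasDerivAt (fun s => f (x, s)) (fderiv ℝ f (x, s) (0, 1)) s :=
    fun s _ => hasDerivAt_snd (hf.differentiable one_ne_zero) x s
  have hcont : Continuous fun s => fderiv ℝ f (x, s) (0, 1) := by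
    have h1 : Continuous fun p => fderiv ℝ f p ((0:ℝ), (1:ℝ)) :=
      (hf.continuous_fderiv one_ne_zero).clm_apply continuous_const
    exact h1.comp (continuous_const.prodMk continuous_id)
  have := intervalIntegral.integral_eq_sub_of_hasDerivAt hd (hcont.intervalIntegrable 0 y)
  rw [this, h0 x, sub_zero]


lemma contIntegrableIoc {φ : ℝ → ℝ} (hφ : Continuous φ) (a b : ℝ) :
    IntegrableOn φ (Ioc a b) := by
  exact (hφ.continuousOn.integrableOn_compact isCompact_Icc).mono_set Ioc_subset_Icc_self

lemma agmon {L : ℝ} (hL : 0 < L) {f : ℝ × ℝ → ℝ} (hf : ContDiff ℝ 1 f) {x : ℝ}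
    (hx : x ∈ Icc 0 L) :
    (∫ s in Ioo (0:ℝ) 1, f (x, s) ^ 2) ≤
      (1/L) * (∫ p in dom L, f p ^ 2)
        + ((∫ p in dom L, f p ^ 2) + ∫ p in dom L, (fderiv ℝ f p (1, 0)) ^ 2) := by
  set df : ℝ × ℝ → ℝ := fun p => fderiv ℝ f p (1, 0) with hdf
  have hdfc : Continuous df :=
    ((hf.continuous_fderiv one_ne_zero).clm_apply continuous_const)
  have hfc : Continuous f := hf.continuous
  have hF2c : Continuous fun p : ℝ × ℝ => f p ^ 2 := hfc.pow 2
  set H : ℝ → ℝ := fun t => ∫ s in (0:ℝ)..1, f (t, s) ^ 2 with hH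
  have hHIoo : ∀ t, H t = ∫ s in Ioo (0:ℝ) 1, f (t, s) ^ 2 := by
    intro t
    rw [show H t = ∫ s in (0:ℝ)..1, f (t, s) ^ 2 from rfl,
      intervalIntegral.integral_of_le zero_le_one, integral_Ioc_eq_integral_Ioo]
  have hHcont : Continuous H := by
    apply intervalIntegral.continuous_parametric_intervalIntegral_of_continuous'
    exact (hfc.comp (continuous_fst.prodMk continuous_snd)).pow 2
  -- minimum point
  obtain ⟨x₀, hx₀m, hmin⟩ := isCompact_Icc.exists_isMinOn (Set.nonempty_Icc.2 hL.le)
    hHcont.continuousOn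
  -- Step A/B : H x₀ ≤ (1/L) * ∫_dom f²
  have hIB : ∫ t in (0:ℝ)..L, H t = ∫ p in dom L, f p ^ 2 := by
    rw [fub _ hF2c, intervalIntegral.integral_of_le hL.le, integral_Ioc_eq_integral_Ioo]
    exact setIntegral_congr_fun measurableSet_Ioo fun t _ => hHIoo t
  have hA : L * H x₀ ≤ ∫ t in (0:ℝ)..L, H t := by
    have h1 : ∫ t in (0:ℝ)..L, H x₀ ≤ ∫ t in (0:ℝ)..L, H t :=
      intervalIntegral.integral_mono_on hL.le intervalIntegrable_const
        (hHcont.intervalIntegrable 0 L) (fun t ht => isMinOn_iff.1 hmin t ht)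
    simpa using h1
  have hx₀le : H x₀ ≤ (1/L) * ∫ p in dom L, f p ^ 2 := by
    rw [← hIB]
    rw [div_mul_eq_mul_div, le_div_iff₀ hL]
    linarith [hA]
  -- Step C : oscillation bound
  have hbound : ∀ s : ℝ, f (x, s) ^ 2 - f (x₀, s) ^ 2
      ≤ ∫ t in Ioc (0:ℝ) L, (f (t, s) ^ 2 + df (t, s) ^ 2) := by
    intro s
    have hds : ∀ t, HasDerivAt (fun t => f (t, s) ^ 2) (2 * f (t, s) * df (t, s)) t := by
      intro t
      have h1 : HasDerivAt (fun t => f (t, s)) (df (t, s)) t :=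
        hasDerivAt_fst (hf.differentiable one_ne_zero) t s
      have := h1.pow 2
      simpa [mul_comm, mul_assoc, mul_left_comm, Pi.pow_def] using this
    have hcont2 : Continuous fun t => 2 * f (t, s) * df (t, s) := by
      have c1 : Continuous fun t : ℝ => f (t, s) := hfc.comp (continuous_id.prodMk continuous_const)
      have c2 : Continuous fun t : ℝ => df (t, s) := hdfc.comp (continuous_id.prodMk continuous_const)
      exact (continuous_const.mul c1).mul c2
    have hftc : ∫ t in x₀..x, (2 * f (t, s) * df (t, s)) = f (x, s) ^ 2 - f (x₀, s) ^ 2 :=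
      intervalIntegral.integral_eq_sub_of_hasDerivAt (fun t _ => hds t)
        (hcont2.intervalIntegrable _ _)
    rw [← hftc]
    calc ∫ t in x₀..x, (2 * f (t, s) * df (t, s))
        ≤ |∫ t in x₀..x, (2 * f (t, s) * df (t, s))| := le_abs_self _
      _ ≤ ∫ t in Ι x₀ x, |2 * f (t, s) * df (t, s)| := by
          simpa only [Real.norm_eq_abs] using
            intervalIntegral.norm_integral_le_integral_norm_uIoc
              (f := fun t => 2 * f (t, s) * df (t, s)) (a := x₀) (b := x) (μ := volume)
      _ ≤ ∫ t in Ioc (0:ℝ) L, |2 * f (t, s) * df (t, s)| := by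
          apply setIntegral_mono_set (contIntegrableIoc hcont2.abs 0 L)
            (Filter.Eventually.of_forall fun t => abs_nonneg _)
          refine Filter.Eventually.of_forall ?_
          rintro t ht
          change t ∈ Ι x₀ x at ht
          show t ∈ Ioc 0 L
          rw [Set.mem_uIoc] at ht
          constructor
          · rcases ht with ⟨h1, _⟩ | ⟨h1, _⟩
            · exact lt_of_le_of_lt hx₀m.1 h1
            · exact lt_of_le_of_lt hx.1 h1
          · rcases ht with ⟨_, h2⟩ | ⟨_, h2⟩
            · exact le_trans h2 hx.2
            · exact le_trans h2 hx₀m.2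
      _ ≤ ∫ t in Ioc (0:ℝ) L, (f (t, s) ^ 2 + df (t, s) ^ 2) := by
          have c1 : Continuous fun t : ℝ => f (t, s) := hfc.comp (continuous_id.prodMk continuous_const)
          have c2 : Continuous fun t : ℝ => df (t, s) := hdfc.comp (continuous_id.prodMk continuous_const)
          apply setIntegral_mono (contIntegrableIoc hcont2.abs 0 L)
          · exact contIntegrableIoc ((c1.pow 2).add (c2.pow 2)) 0 L
          · intro t
            have h2 : |2 * f (t, s) * df (t, s)| = 2 * |f (t, s)| * |df (t, s)| := by
              rw [abs_mul, abs_mul]; simp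
            show |2 * f (t, s) * df (t, s)| ≤ f (t, s) ^ 2 + df (t, s) ^ 2
            rw [h2]
            nlinarith [sq_nonneg (|f (t, s)| - |df (t, s)|), sq_abs (f (t, s)),
              sq_abs (df (t, s))]
  have hHx : H x ≤ H x₀ + ∫ s in (0:ℝ)..1, ∫ t in Ioc (0:ℝ) L, (f (t, s) ^ 2 + df (t, s) ^ 2) := by
    have c1 : ∀ t : ℝ, Continuous fun s : ℝ => f (t, s) ^ 2 :=
      fun t => (hfc.comp (continuous_const.prodMk continuous_id)).pow 2
    have hsub : H x - H x₀ = ∫ s in (0:ℝ)..1, (f (x, s) ^ 2 - f (x₀, s) ^ 2) := by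
      rw [hH]
      rw [← intervalIntegral.integral_sub ((c1 x).intervalIntegrable 0 1)
        ((c1 x₀).intervalIntegrable 0 1)]
    have hmono : ∫ s in (0:ℝ)..1, (f (x, s) ^ 2 - f (x₀, s) ^ 2)
        ≤ ∫ s in (0:ℝ)..1, ∫ t in Ioc (0:ℝ) L, (f (t, s) ^ 2 + df (t, s) ^ 2) := by
      apply intervalIntegral.integral_mono_on zero_le_one
      · exact ((c1 x).sub (c1 x₀)).intervalIntegrable 0 1
      · have : Continuous fun s : ℝ => ∫ t in Ioc (0:ℝ) L, (f (t, s) ^ 2 + df (t, s) ^ 2) := by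
          have := intervalIntegral.continuous_parametric_intervalIntegral_of_continuous'
            (f := fun s t => f (t, s) ^ 2 + df (t, s) ^ 2) (μ := volume) ?hc 0 L
          case hc =>
            exact ((hfc.comp (continuous_snd.prodMk continuous_fst)).pow 2).add
              ((hdfc.comp (continuous_snd.prodMk continuous_fst)).pow 2)
          · refine Continuous.congr this fun s => ?_
            rw [intervalIntegral.integral_of_le hL.le]
        exact this.intervalIntegrable 0 1
      · exact fun s _ => hbound s
    linarith [hsub, hmono]
  -- Step D : identify the double integral
  have hD : ∫ s in (0:ℝ)..1, ∫ t in Ioc (0:ℝ) L, (f (t, s) ^ 2 + df (t, s) ^ 2)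
      = (∫ p in dom L, f p ^ 2) + ∫ p in dom L, df p ^ 2 := by
    have hsum : Continuous fun p : ℝ × ℝ => f p ^ 2 + df p ^ 2 := by
      exact hF2c.add (hdfc.pow 2)
    rw [← integral_add (integrableOn_dom hF2c) (integrableOn_dom (F := fun p => df p ^ 2) (hdfc.pow 2))]
    rw [fub_symm _ hsum, intervalIntegral.integral_of_le zero_le_one,
      integral_Ioc_eq_integral_Ioo]
    refine setIntegral_congr_fun measurableSet_Ioo fun s _ => ?_
    rw [integral_Ioc_eq_integral_Ioo]
  rw [← hHIoo x]
  calc H x ≤ H x₀ + ∫ s in (0:ℝ)..1, ∫ t in Ioc (0:ℝ) L, (f (t, s) ^ 2 + df (t, s) ^ 2) := hHx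
    _ ≤ (1/L) * (∫ p in dom L, f p ^ 2)
        + ((∫ p in dom L, f p ^ 2) + ∫ p in dom L, df p ^ 2) := by
        rw [hD]; linarith [hx₀le]

end S14

open S14 in
/-- Anisotropic trilinear estimate (key step in the uniqueness proof):
`∫_Ω |ρ−ρ̄| |∫₀^y ∂ₓu| |∂_y u| |ū−u| ≤ C ‖ρ−ρ̄‖_{L²} ‖u‖_{H²}² ‖∇(ū−u)‖_{L²}`. -/
theorem stmt14 (L : ℝ) (hL : 0 < L) :
    ∃ C > 0, ∀ u ubar ρ ρbar : ℝ × ℝ → ℝ,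
      ContDiff ℝ 2 u → ContDiff ℝ 1 ubar →
      (∀ x y : ℝ, u (x + L, y) = u (x, y)) →
      (∀ x y : ℝ, ubar (x + L, y) = ubar (x, y)) →
      (∀ x : ℝ, u (x, 0) = 0 ∧ u (x, 1) = 0) →
      (∀ x : ℝ, ubar (x, 0) = 0 ∧ ubar (x, 1) = 0) →
      Measurable ρ → Measurable ρbar →
      IntegrableOn (fun p => (ρ p - ρbar p) ^ 2) (dom L) →
      (∫ p in dom L, |ρ p - ρbar p|
          * |∫ s in (0:ℝ)..p.2, fderiv ℝ u (p.1, s) (1, 0)|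
          * |fderiv ℝ u p (0, 1)| * |ubar p - u p|)
        ≤ C * Real.sqrt (∫ p in dom L, (ρ p - ρbar p) ^ 2)
            * (sobNorm 2 L u) ^ 2
            * Real.sqrt (∫ p in dom L, ‖fderiv ℝ (fun q => ubar q - u q) p‖ ^ 2) := by
  refine ⟨1/L + 2, by positivity, ?_⟩
  intro u ubar ρ ρbar hu hubar hper hperb hbc hbcb hρ hρbar hρint
  have hdommeas : MeasurableSet (dom L) := measurableSet_Ioo.prod measurableSet_Ioo
  set w : ℝ × ℝ → ℝ := fun q => ubar q - u q with hw
  have hwc : ContDiff ℝ 1 w := hubar.sub (hu.of_le one_le_two)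
  set f1 : ℝ × ℝ → ℝ := fun p => fderiv ℝ u p (1, 0) with hf1
  set f2 : ℝ × ℝ → ℝ := fun p => fderiv ℝ u p (0, 1) with hf2
  set dyw : ℝ × ℝ → ℝ := fun p => fderiv ℝ w p (0, 1) with hdyw
  have hf1d : ContDiff ℝ 1 f1 := contDiff_fderiv_apply hu _
  have hf2d : ContDiff ℝ 1 f2 := contDiff_fderiv_apply hu _
  have hf1c : Continuous f1 := hf1d.continuous
  have hf2c : Continuous f2 := hf2d.continuous
  have hdywc : Continuous dyw := (hwc.continuous_fderiv one_ne_zero).clm_apply continuous_const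
  set N2 : ℝ := ∑ i ∈ Finset.range (2 + 1), ∫ p in dom L, ‖iteratedFDeriv ℝ i u p‖ ^ 2 with hN2
  have hiterc : ∀ i : ℕ, i ≤ 2 → Continuous fun p => ‖iteratedFDeriv ℝ i u p‖ ^ 2 := by
    intro i hi
    exact ((hu.continuous_iteratedFDeriv (by exact_mod_cast hi)).norm.pow 2)
  have hIle : ∀ i : ℕ, i < 3 → (∫ p in dom L, ‖iteratedFDeriv ℝ i u p‖ ^ 2) ≤ N2 := by
    intro i hi
    rw [hN2]
    exact Finset.single_le_sum
      (f := fun j => ∫ p in dom L, ‖iteratedFDeriv ℝ j u p‖ ^ 2)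
      (fun j _ => integral_nonneg fun p => sq_nonneg _) (Finset.mem_range.2 hi)
  have hN2nn : 0 ≤ N2 :=
    le_trans (integral_nonneg fun p => sq_nonneg _) (hIle 0 (by norm_num))
  set S : ℝ := (1/L + 2) * N2 with hS
  have hSnn : 0 ≤ S := mul_nonneg (by positivity) hN2nn
  -- pointwise bounds on derivatives by iterated derivative norms
  have hf1sq : ∀ p, f1 p ^ 2 ≤ ‖iteratedFDeriv ℝ 1 u p‖ ^ 2 := by
    intro p
    have h := abs_fderiv_le u p (1, 0) (le_of_eq norm_e1)
    calc f1 p ^ 2 = |f1 p| ^ 2 := (sq_abs _).symm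
      _ ≤ _ := pow_le_pow_left₀ (abs_nonneg _) h 2
  have hf2sq : ∀ p, f2 p ^ 2 ≤ ‖iteratedFDeriv ℝ 1 u p‖ ^ 2 := by
    intro p
    have h := abs_fderiv_le u p (0, 1) (le_of_eq norm_e2)
    calc f2 p ^ 2 = |f2 p| ^ 2 := (sq_abs _).symm
      _ ≤ _ := pow_le_pow_left₀ (abs_nonneg _) h 2
  have hdf1sq : ∀ p, (fderiv ℝ f1 p (1, 0)) ^ 2 ≤ ‖iteratedFDeriv ℝ 2 u p‖ ^ 2 := by
    intro p
    have h := abs_fderiv_fderiv_le hu (1, 0) (1, 0) p (le_of_eq norm_e1) (le_of_eq norm_e1)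
    calc (fderiv ℝ f1 p (1, 0)) ^ 2 = |fderiv ℝ f1 p (1, 0)| ^ 2 := (sq_abs _).symm
      _ ≤ _ := pow_le_pow_left₀ (abs_nonneg _) h 2
  have hdf2sq : ∀ p, (fderiv ℝ f2 p (1, 0)) ^ 2 ≤ ‖iteratedFDeriv ℝ 2 u p‖ ^ 2 := by
    intro p
    have h := abs_fderiv_fderiv_le hu (0, 1) (1, 0) p (le_of_eq norm_e2) (le_of_eq norm_e1)
    calc (fderiv ℝ f2 p (1, 0)) ^ 2 = |fderiv ℝ f2 p (1, 0)| ^ 2 := (sq_abs _).symm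
      _ ≤ _ := pow_le_pow_left₀ (abs_nonneg _) h 2
  -- integral bounds
  have hdf1c : Continuous fun p => fderiv ℝ f1 p (1, 0) :=
    (hf1d.continuous_fderiv one_ne_zero).clm_apply continuous_const
  have hdf2c : Continuous fun p => fderiv ℝ f2 p (1, 0) :=
    (hf2d.continuous_fderiv one_ne_zero).clm_apply continuous_const
  have hIf1 : (∫ p in dom L, f1 p ^ 2) ≤ N2 :=
    le_trans (setIntegral_mono (integrableOn_dom (hf1c.pow 2))
      (integrableOn_dom (hiterc 1 (by norm_num))) hf1sq) (hIle 1 (by norm_num))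
  have hIf2 : (∫ p in dom L, f2 p ^ 2) ≤ N2 :=
    le_trans (setIntegral_mono (integrableOn_dom (hf2c.pow 2))
      (integrableOn_dom (hiterc 1 (by norm_num))) hf2sq) (hIle 1 (by norm_num))
  have hIdf1 : (∫ p in dom L, (fderiv ℝ f1 p (1, 0)) ^ 2) ≤ N2 :=
    le_trans (setIntegral_mono (integrableOn_dom (hdf1c.pow 2))
      (integrableOn_dom (hiterc 2 (by norm_num))) hdf1sq) (hIle 2 (by norm_num))
  have hIdf2 : (∫ p in dom L, (fderiv ℝ f2 p (1, 0)) ^ 2) ≤ N2 :=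
    le_trans (setIntegral_mono (integrableOn_dom (hdf2c.pow 2))
      (integrableOn_dom (hiterc 2 (by norm_num))) hdf2sq) (hIle 2 (by norm_num))
  -- the anisotropic (Agmon) bounds
  have hH1 : ∀ x ∈ Icc (0:ℝ) L, (∫ s in Ioo (0:ℝ) 1, f1 (x, s) ^ 2) ≤ S := by
    intro x hx
    have h := agmon hL hf1d hx
    calc (∫ s in Ioo (0:ℝ) 1, f1 (x, s) ^ 2)
        ≤ (1/L) * (∫ p in dom L, f1 p ^ 2)
          + ((∫ p in dom L, f1 p ^ 2) + ∫ p in dom L, (fderiv ℝ f1 p (1, 0)) ^ 2) := h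
      _ ≤ (1/L) * N2 + (N2 + N2) :=
          add_le_add (mul_le_mul_of_nonneg_left hIf1 (by positivity))
            (add_le_add hIf1 hIdf1)
      _ = S := by rw [hS]; ring
  have hH2 : ∀ x ∈ Icc (0:ℝ) L, (∫ s in Ioo (0:ℝ) 1, f2 (x, s) ^ 2) ≤ S := by
    intro x hx
    have h := agmon hL hf2d hx
    calc (∫ s in Ioo (0:ℝ) 1, f2 (x, s) ^ 2)
        ≤ (1/L) * (∫ p in dom L, f2 p ^ 2)
          + ((∫ p in dom L, f2 p ^ 2) + ∫ p in dom L, (fderiv ℝ f2 p (1, 0)) ^ 2) := h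
      _ ≤ (1/L) * N2 + (N2 + N2) :=
          add_le_add (mul_le_mul_of_nonneg_left hIf2 (by positivity))
            (add_le_add hIf2 hIdf2)
      _ = S := by rw [hS]; ring
  -- vertical L² quantities
  set G : ℝ → ℝ := fun x => ∫ s in Ioo (0:ℝ) 1, dyw (x, s) ^ 2 with hG
  have hGnn : ∀ x, 0 ≤ G x := fun x => integral_nonneg fun s => sq_nonneg _
  have hGc : Continuous G := by
    have h := intervalIntegral.continuous_parametric_intervalIntegral_of_continuous'
      (f := fun x s => dyw (x, s) ^ 2) (μ := volume)
      (by exact (hdywc.comp (continuous_fst.prodMk continuous_snd)).pow 2) 0 1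
    refine h.congr fun x => ?_
    rw [intervalIntegral.integral_of_le zero_le_one, integral_Ioc_eq_integral_Ioo]
  -- one-dimensional Cauchy-Schwarz bound for primitives
  have oneDCS : ∀ ψ : ℝ → ℝ, Continuous ψ → ∀ y ∈ Ioc (0:ℝ) 1,
      |∫ s in (0:ℝ)..y, ψ s| ≤ Real.sqrt (∫ s in Ioo (0:ℝ) 1, ψ s ^ 2) := by
    intro ψ hψ y hy
    have h1 : |∫ s in (0:ℝ)..y, ψ s| ≤ ∫ s in Ι (0:ℝ) y, |ψ s| := by
      simpa only [Real.norm_eq_abs] using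
        intervalIntegral.norm_integral_le_integral_norm_uIoc (f := ψ) (a := 0) (b := y)
          (μ := volume)
    have h2 : Ι (0:ℝ) y = Ioc 0 y := uIoc_of_le hy.1.le
    have h3 : (∫ s in Ioc (0:ℝ) y, |ψ s|) ≤ ∫ s in Ioc (0:ℝ) 1, |ψ s| :=
      setIntegral_mono_set (contIntegrableIoc hψ.abs 0 1)
        (Filter.Eventually.of_forall fun s => abs_nonneg _)
        (HasSubset.Subset.eventuallyLE (Ioc_subset_Ioc le_rfl hy.2))
    have h4 : (∫ s in Ioc (0:ℝ) 1, |ψ s|) = ∫ s in Ioo (0:ℝ) 1, |ψ s| :=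
      integral_Ioc_eq_integral_Ioo
    have hfin1 : volume (Ioo (0:ℝ) 1) < ⊤ := by simp [Real.volume_Ioo]
    have h5 : (∫ s in Ioo (0:ℝ) 1, |ψ s|) ≤ Real.sqrt (∫ s in Ioo (0:ℝ) 1, ψ s ^ 2) := by
      have hcs := cauchy_schwarz (volume.restrict (Ioo (0:ℝ) 1))
        (f := fun s => |ψ s|) (g := fun _ => (1:ℝ))
        hψ.abs.aestronglyMeasurable aestronglyMeasurable_const
        (((hψ.abs.pow 2).continuousOn.integrableOn_compact isCompact_Icc).mono_set
          Ioo_subset_Icc_self)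
        (integrableOn_const hfin1.ne)
        (Filter.Eventually.of_forall fun s => abs_nonneg _)
        (Filter.Eventually.of_forall fun s => zero_le_one)
      simpa [sq_abs, Real.volume_Ioo] using hcs
    calc |∫ s in (0:ℝ)..y, ψ s| ≤ ∫ s in Ι (0:ℝ) y, |ψ s| := h1
      _ = ∫ s in Ioc (0:ℝ) y, |ψ s| := by rw [h2]
      _ ≤ ∫ s in Ioc (0:ℝ) 1, |ψ s| := h3
      _ = ∫ s in Ioo (0:ℝ) 1, |ψ s| := h4
      _ ≤ _ := h5
  -- pointwise bounds on the factors
  have hAbd : ∀ p ∈ dom L, |∫ s in (0:ℝ)..p.2, f1 (p.1, s)|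
      ≤ Real.sqrt (∫ s in Ioo (0:ℝ) 1, f1 (p.1, s) ^ 2) := by
    rintro ⟨x, y⟩ hp
    simp only [dom, Set.mem_prod, Set.mem_Ioo] at hp
    exact oneDCS (fun s => f1 (x, s))
      (hf1c.comp (continuous_const.prodMk continuous_id)) y ⟨hp.2.1, hp.2.2.le⟩
  have hDbd : ∀ p ∈ dom L, |w p| ≤ Real.sqrt (G p.1) := by
    rintro ⟨x, y⟩ hp
    simp only [dom, Set.mem_prod, Set.mem_Ioo] at hp
    have h0 : ∀ t : ℝ, w (t, 0) = 0 := by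
      intro t; rw [hw]; simp [(hbc t).1, (hbcb t).1]
    have hftc := ftc_vertical hwc h0 x y
    rw [show w (x, y) = ∫ s in (0:ℝ)..y, dyw (x, s) from hftc]
    exact oneDCS (fun s => dyw (x, s))
      (hdywc.comp (continuous_const.prodMk continuous_id)) y ⟨hp.2.1, hp.2.2.le⟩
  -- the main product functions
  set φ : ℝ × ℝ → ℝ := fun p => |ρ p - ρbar p| with hφ
  have hφm : AEStronglyMeasurable φ (volume.restrict (dom L)) :=
    ((hρ.sub hρbar).abs).aestronglyMeasurable
  have hφ2 : IntegrableOn (fun p => φ p ^ 2) (dom L) := by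
    have : (fun p => φ p ^ 2) = fun p => (ρ p - ρbar p) ^ 2 := by
      funext p; rw [hφ]; exact sq_abs _
    rw [this]; exact hρint
  have hfin : volume (dom L) < ⊤ :=
    lt_of_le_of_lt (measure_mono (Set.prod_mono Ioo_subset_Icc_self Ioo_subset_Icc_self))
      (isCompact_Icc.prod isCompact_Icc).measure_lt_top
  haveI : IsFiniteMeasure (volume.restrict (dom L)) :=
    ⟨by rwa [Measure.restrict_apply_univ]⟩
  have hφint : IntegrableOn φ (dom L) :=
    ((memLp_two_iff_integrable_sq hφm).2 hφ2).integrable one_le_two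
  set Ψ : ℝ × ℝ → ℝ := fun p => |f2 p| * Real.sqrt (G p.1) with hΨ
  have hΨc : Continuous Ψ :=
    (hf2c.abs).mul (Real.continuous_sqrt.comp (hGc.comp continuous_fst))
  have hΨnn : ∀ p, 0 ≤ Ψ p := fun p => mul_nonneg (abs_nonneg _) (Real.sqrt_nonneg _)
  -- pointwise main bound
  have hptwise : ∀ p ∈ dom L, φ p * |∫ s in (0:ℝ)..p.2, f1 (p.1, s)| * |f2 p| * |w p|
      ≤ Real.sqrt S * (φ p * Ψ p) := by
    intro p hp
    have hx : p.1 ∈ Icc (0:ℝ) L := by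
      have hp' := hp
      simp only [dom, Set.mem_prod, Set.mem_Ioo] at hp'
      exact ⟨hp'.1.1.le, hp'.1.2.le⟩
    have h2 : |∫ s in (0:ℝ)..p.2, f1 (p.1, s)| ≤ Real.sqrt S :=
      le_trans (hAbd p hp) (Real.sqrt_le_sqrt (hH1 p.1 hx))
    have h3 := hDbd p hp
    calc φ p * |∫ s in (0:ℝ)..p.2, f1 (p.1, s)| * |f2 p| * |w p|
        ≤ φ p * Real.sqrt S * |f2 p| * Real.sqrt (G p.1) := by
          have n1 : 0 ≤ φ p := abs_nonneg _
          have n2 : 0 ≤ |f2 p| := abs_nonneg _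
          have n3 : 0 ≤ |w p| := abs_nonneg _
          have := mul_le_mul (mul_le_mul (mul_le_mul_of_nonneg_left h2 n1) le_rfl n2
            (by positivity)) h3 n3 (by positivity)
          exact this
      _ = Real.sqrt S * (φ p * Ψ p) := by rw [hΨ]; ring
  -- integrability of the dominating function
  have hΨbd : ∃ M : ℝ, ∀ p ∈ dom L, Ψ p ≤ M := by
    obtain ⟨M, hM⟩ := (isCompact_Icc.prod isCompact_Icc :
      IsCompact (Icc (0:ℝ) L ×ˢ Icc (0:ℝ) 1)).exists_bound_of_continuousOn hΨc.continuousOn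
    refine ⟨M, fun p hp => ?_⟩
    have hpK : p ∈ Icc (0:ℝ) L ×ˢ Icc (0:ℝ) 1 :=
      Set.prod_mono Ioo_subset_Icc_self Ioo_subset_Icc_self hp
    have := hM p hpK
    rw [Real.norm_eq_abs, abs_of_nonneg (hΨnn p)] at this
    exact this
  have hφΨint : IntegrableOn (fun p => φ p * Ψ p) (dom L) := by
    obtain ⟨M, hM⟩ := hΨbd
    refine Integrable.mono' (hφint.const_mul M) (hφm.mul hΨc.aestronglyMeasurable) ?_
    filter_upwards [ae_restrict_mem hdommeas] with p hp
    rw [Real.norm_eq_abs, abs_mul, abs_of_nonneg (abs_nonneg (ρ p - ρbar p)),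
      abs_of_nonneg (hΨnn p)]
    calc φ p * Ψ p ≤ φ p * M := mul_le_mul_of_nonneg_left (hM p hp) (abs_nonneg _)
      _ = M * φ p := mul_comm _ _
  have hg_int : IntegrableOn (fun p => Real.sqrt S * (φ p * Ψ p)) (dom L) :=
    hφΨint.const_mul _
  -- step 1 : domination
  have step1 : (∫ p in dom L, φ p * |∫ s in (0:ℝ)..p.2, f1 (p.1, s)| * |f2 p| * |w p|)
      ≤ ∫ p in dom L, Real.sqrt S * (φ p * Ψ p) := by
    apply integral_mono_of_nonneg
    · exact Filter.Eventually.of_forall fun p => by positivity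
    · exact hg_int
    · filter_upwards [ae_restrict_mem hdommeas] with p hp using hptwise p hp
  -- step 2 : pull out the constant and Cauchy-Schwarz
  have step2 : (∫ p in dom L, Real.sqrt S * (φ p * Ψ p))
      = Real.sqrt S * ∫ p in dom L, φ p * Ψ p := integral_const_mul _ _
  have step3 : (∫ p in dom L, φ p * Ψ p)
      ≤ Real.sqrt (∫ p in dom L, φ p ^ 2) * Real.sqrt (∫ p in dom L, Ψ p ^ 2) :=
    cauchy_schwarz _ hφm hΨc.aestronglyMeasurable hφ2 (integrableOn_dom (hΨc.pow 2))
      (Filter.Eventually.of_forall fun p => abs_nonneg _)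
      (Filter.Eventually.of_forall hΨnn)
  -- step 4 : the anisotropic estimate for ∫ Ψ²
  have hΨsq : ∀ p : ℝ × ℝ, Ψ p ^ 2 = f2 p ^ 2 * G p.1 := by
    intro p
    rw [hΨ, mul_pow, sq_abs, Real.sq_sqrt (hGnn p.1)]
  have hK2c : Continuous fun x => ∫ y in Ioo (0:ℝ) 1, f2 (x, y) ^ 2 := by
    have h := intervalIntegral.continuous_parametric_intervalIntegral_of_continuous'
      (f := fun x s => f2 (x, s) ^ 2) (μ := volume)
      (by exact (hf2c.comp (continuous_fst.prodMk continuous_snd)).pow 2) 0 1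
    refine h.congr fun x => ?_
    rw [intervalIntegral.integral_of_le zero_le_one, integral_Ioc_eq_integral_Ioo]
  have step4 : (∫ p in dom L, Ψ p ^ 2) ≤ S * ∫ p in dom L, dyw p ^ 2 := by
    have e1 : (∫ p in dom L, Ψ p ^ 2)
        = ∫ x in Ioo (0:ℝ) L, (∫ y in Ioo (0:ℝ) 1, f2 (x, y) ^ 2) * G x := by
      rw [fub (fun p => Ψ p ^ 2) (hΨc.pow 2)]
      refine setIntegral_congr_fun measurableSet_Ioo fun x _ => ?_
      simp only [hΨsq]
      rw [MeasureTheory.integral_mul_const]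
    have e2 : (∫ x in Ioo (0:ℝ) L, (∫ y in Ioo (0:ℝ) 1, f2 (x, y) ^ 2) * G x)
        ≤ ∫ x in Ioo (0:ℝ) L, S * G x := by
      apply setIntegral_mono_on
      · exact ((hK2c.mul hGc).continuousOn.integrableOn_compact isCompact_Icc).mono_set
          Ioo_subset_Icc_self
      · exact ((continuous_const.mul hGc).continuousOn.integrableOn_compact
          isCompact_Icc).mono_set Ioo_subset_Icc_self
      · exact measurableSet_Ioo
      · intro x hx
        exact mul_le_mul_of_nonneg_right (hH2 x ⟨hx.1.le, hx.2.le⟩) (hGnn x)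
    have e3 : (∫ x in Ioo (0:ℝ) L, S * G x) = S * ∫ x in Ioo (0:ℝ) L, G x :=
      integral_const_mul _ _
    have e4 : (∫ x in Ioo (0:ℝ) L, G x) = ∫ p in dom L, dyw p ^ 2 :=
      (fub _ (hdywc.pow 2)).symm
    rw [e1]
    calc (∫ x in Ioo (0:ℝ) L, (∫ y in Ioo (0:ℝ) 1, f2 (x, y) ^ 2) * G x)
        ≤ ∫ x in Ioo (0:ℝ) L, S * G x := e2
      _ = S * ∫ x in Ioo (0:ℝ) L, G x := e3
      _ = S * ∫ p in dom L, dyw p ^ 2 := by rw [e4]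
  -- step 5 : compare with the full gradient
  have hdywle : ∀ p, dyw p ^ 2 ≤ ‖fderiv ℝ w p‖ ^ 2 := by
    intro p
    have h := (fderiv ℝ w p).le_opNorm ((0:ℝ), (1:ℝ))
    rw [norm_e2, mul_one] at h
    calc dyw p ^ 2 = |dyw p| ^ 2 := (sq_abs _).symm
      _ ≤ ‖fderiv ℝ w p‖ ^ 2 :=
        pow_le_pow_left₀ (abs_nonneg _) (by simpa [Real.norm_eq_abs] using h) 2
  have step5 : (∫ p in dom L, dyw p ^ 2) ≤ ∫ p in dom L, ‖fderiv ℝ w p‖ ^ 2 :=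
    setIntegral_mono (integrableOn_dom (hdywc.pow 2))
      (integrableOn_dom ((hwc.continuous_fderiv one_ne_zero).norm.pow 2)) hdywle
  -- assemble
  have hsob : sobNorm 2 L u ^ 2 = N2 := by
    rw [sobNorm, Real.sq_sqrt]
    rw [← hN2]; exact hN2nn
  have hφeq : (∫ p in dom L, φ p ^ 2) = ∫ p in dom L, (ρ p - ρbar p) ^ 2 :=
    integral_congr_ae (Filter.Eventually.of_forall fun p => sq_abs _)
  have hΨ2le : Real.sqrt (∫ p in dom L, Ψ p ^ 2)
      ≤ Real.sqrt S * Real.sqrt (∫ p in dom L, ‖fderiv ℝ w p‖ ^ 2) := by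
    calc Real.sqrt (∫ p in dom L, Ψ p ^ 2)
        ≤ Real.sqrt (S * ∫ p in dom L, dyw p ^ 2) := Real.sqrt_le_sqrt step4
      _ ≤ Real.sqrt (S * ∫ p in dom L, ‖fderiv ℝ w p‖ ^ 2) :=
          Real.sqrt_le_sqrt (mul_le_mul_of_nonneg_left step5 hSnn)
      _ = Real.sqrt S * Real.sqrt (∫ p in dom L, ‖fderiv ℝ w p‖ ^ 2) :=
          Real.sqrt_mul hSnn _
  have hss : Real.sqrt S * Real.sqrt S = S := Real.mul_self_sqrt hSnn
  calc (∫ p in dom L, |ρ p - ρbar p|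
          * |∫ s in (0:ℝ)..p.2, fderiv ℝ u (p.1, s) (1, 0)|
          * |fderiv ℝ u p (0, 1)| * |ubar p - u p|)
      = ∫ p in dom L, φ p * |∫ s in (0:ℝ)..p.2, f1 (p.1, s)| * |f2 p| * |w p| := rfl
    _ ≤ ∫ p in dom L, Real.sqrt S * (φ p * Ψ p) := step1
    _ = Real.sqrt S * ∫ p in dom L, φ p * Ψ p := step2
    _ ≤ Real.sqrt S * (Real.sqrt (∫ p in dom L, φ p ^ 2)
          * Real.sqrt (∫ p in dom L, Ψ p ^ 2)) :=
        mul_le_mul_of_nonneg_left step3 (Real.sqrt_nonneg _)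
    _ ≤ Real.sqrt S * (Real.sqrt (∫ p in dom L, φ p ^ 2)
          * (Real.sqrt S * Real.sqrt (∫ p in dom L, ‖fderiv ℝ w p‖ ^ 2))) :=
        mul_le_mul_of_nonneg_left
          (mul_le_mul_of_nonneg_left hΨ2le (Real.sqrt_nonneg _)) (Real.sqrt_nonneg _)
    _ = (Real.sqrt S * Real.sqrt S) * (Real.sqrt (∫ p in dom L, φ p ^ 2)
          * Real.sqrt (∫ p in dom L, ‖fderiv ℝ w p‖ ^ 2)) := by ring
    _ = S * (Real.sqrt (∫ p in dom L, φ p ^ 2)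
          * Real.sqrt (∫ p in dom L, ‖fderiv ℝ w p‖ ^ 2)) := by rw [hss]
    _ = (1/L + 2) * Real.sqrt (∫ p in dom L, (ρ p - ρbar p) ^ 2)
          * (sobNorm 2 L u) ^ 2
          * Real.sqrt (∫ p in dom L, ‖fderiv ℝ w p‖ ^ 2) := by
        rw [hφeq, hS, ← hsob]; ring
end

section
/- Let φ : [0,T] → [1,∞) be continuous and satisfy φ(t) ≤ C exp[C(1 + V) exp(C ∫₀ᵗ φ(s)^N ds)] for all t ∈ [0,T], where C ≥ 1, V ≥ 0 and N ≥ 1 are constants. Then there exists T* ∈ (0,T], depending only on C, V, N, such that φ(t) ≤ C exp[C(1 + V) e] for all t ∈ [0,T*]. -/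
open MeasureTheory Set intervalIntegral

/-- Doubly-exponential bootstrap inequality: if `φ ≥ 1` is continuous and
`φ(t) ≤ C exp[C(1+V) exp(C ∫₀ᵗ φ^N)]`, then on some `[0,T*]` with `T*` depending only
on `C, V, N`, `φ(t) ≤ C exp[C(1+V)e]`. -/
theorem stmt18 (T C V N : ℝ) (hT : 0 < T) (hC : 1 ≤ C) (hV : 0 ≤ V) (hN : 1 ≤ N) :
    ∃ Tstar ∈ Ioc (0:ℝ) T, ∀ φ : ℝ → ℝ,
      ContinuousOn φ (Icc 0 T) →
      (∀ t ∈ Icc (0:ℝ) T, 1 ≤ φ t) →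
      (∀ t ∈ Icc (0:ℝ) T, φ t ≤ C * Real.exp (C * (1 + V) *
          Real.exp (C * ∫ s in (0:ℝ)..t, (φ s) ^ N))) →
      ∀ t ∈ Icc (0:ℝ) Tstar, φ t ≤ C * Real.exp (C * (1 + V) * Real.exp 1) := by
  have hCpos : (0:ℝ) < C := by linarith
  set M : ℝ := C * Real.exp (C * (1 + V) * Real.exp 1) with hMdef
  have hMpos : 0 < M := mul_pos hCpos (Real.exp_pos _)
  have hMN : (0:ℝ) < M ^ N := Real.rpow_pos_of_pos hMpos N
  have hTsden : (0:ℝ) < 2 * C * M ^ N := by positivity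
  set Tstar : ℝ := min T (1 / (2 * C * M ^ N)) with hTsdef
  have hTs0 : 0 < Tstar := lt_min hT (by positivity)
  have hTsT : Tstar ≤ T := min_le_left _ _
  have hTsle : Tstar ≤ 1 / (2 * C * M ^ N) := min_le_right _ _
  refine ⟨Tstar, ⟨hTs0, hTsT⟩, ?_⟩
  intro φ hφc hφ1 hφle
  have hsub : Icc (0:ℝ) Tstar ⊆ Icc 0 T := Icc_subset_Icc le_rfl hTsT
  -- continuity and integrability of the integrand
  have hN0 : (0:ℝ) ≤ N := by linarith
  have hcont : ContinuousOn (fun s => φ s ^ N) (Icc 0 T) := by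
    apply hφc.rpow_const
    intro x hx; exact Or.inr hN0
  have hint : ∀ a b, a ∈ Icc (0:ℝ) T → b ∈ Icc (0:ℝ) T →
      IntervalIntegrable (fun s => φ s ^ N) volume a b := by
    intro a b ha hb
    exact (hcont.mono (uIcc_subset_Icc ha hb)).intervalIntegrable
  have hnn : ∀ s ∈ Icc (0:ℝ) T, 0 ≤ φ s ^ N := by
    intro s hs
    exact Real.rpow_nonneg (by linarith [hφ1 s hs]) N
  set g : ℝ → ℝ := fun t => ∫ s in (0:ℝ)..t, φ s ^ N with hgdef
  have hg0 : g 0 = 0 := integral_same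
  -- additivity
  have hadd : ∀ a b, a ∈ Icc (0:ℝ) T → b ∈ Icc (0:ℝ) T →
      g b = g a + ∫ s in a..b, φ s ^ N := by
    intro a b ha hb
    have h0 : (0:ℝ) ∈ Icc (0:ℝ) T := ⟨le_rfl, hT.le⟩
    rw [hgdef]
    simp only
    rw [← integral_add_adjacent_intervals (hint 0 a h0 ha) (hint a b ha hb)]
  -- monotonicity
  have hmono : ∀ a b, a ∈ Icc (0:ℝ) T → b ∈ Icc (0:ℝ) T → a ≤ b → g a ≤ g b := by
    intro a b ha hb hab
    have h1 : 0 ≤ ∫ s in a..b, φ s ^ N := by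
      apply intervalIntegral.integral_nonneg hab
      intro u hu
      exact hnn u ⟨le_trans ha.1 hu.1, le_trans hu.2 hb.2⟩
    rw [hadd a b ha hb]; linarith
  -- Lipschitz-type bound
  have hlip : ∀ (c : ℝ) (a b : ℝ), a ∈ Icc (0:ℝ) T → b ∈ Icc (0:ℝ) T → a ≤ b →
      (∀ s ∈ Icc a b, φ s ^ N ≤ c) → g b ≤ g a + (b - a) * c := by
    intro c a b ha hb hab hbd
    have h1 : (∫ s in a..b, φ s ^ N) ≤ ∫ _ in a..b, c := by
      apply intervalIntegral.integral_mono_on hab (hint a b ha hb)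
        (intervalIntegrable_const) hbd
    rw [intervalIntegral.integral_const, smul_eq_mul] at h1
    rw [hadd a b ha hb]; linarith
  -- pointwise bound from g t ≤ 1/C
  have hφbound : ∀ t ∈ Icc (0:ℝ) T, g t ≤ 1 / C → φ t ≤ M := by
    intro t ht hgt
    have h1 : C * g t ≤ 1 := by
      have h := mul_le_mul_of_nonneg_left hgt hCpos.le
      rw [mul_one_div, div_self (ne_of_gt hCpos)] at h
      exact h
    calc φ t ≤ C * Real.exp (C * (1 + V) * Real.exp (C * g t)) := hφle t ht
      _ ≤ M := by
          rw [hMdef]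
          apply mul_le_mul_of_nonneg_left _ hCpos.le
          apply Real.exp_le_exp.mpr
          apply mul_le_mul_of_nonneg_left _ (by positivity)
          exact Real.exp_le_exp.mpr h1
  -- bound φ ≤ B on the whole interval
  obtain ⟨B₀, hB₀⟩ := (isCompact_Icc).exists_bound_of_continuousOn hφc
  set B : ℝ := max B₀ 1 with hBdef
  have hB1 : (1:ℝ) ≤ B := le_max_right _ _
  have hBpos : (0:ℝ) < B := by linarith
  have hφB : ∀ s ∈ Icc (0:ℝ) T, φ s ^ N ≤ B ^ N := by
    intro s hs
    apply Real.rpow_le_rpow (by linarith [hφ1 s hs]) _ hN0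
    exact le_trans (le_trans (le_abs_self _) (hB₀ s hs)) (le_max_left _ _)
  have hBN : (0:ℝ) < B ^ N := Real.rpow_pos_of_pos hBpos N
  -- the key step: g t ≤ 1/C improves to g t ≤ 1/(2C)
  have hkey : ∀ t ∈ Icc (0:ℝ) Tstar, g t ≤ 1 / C → g t ≤ 1 / (2 * C) := by
    intro t ht hgt
    have htT : t ∈ Icc (0:ℝ) T := hsub ht
    have hφM : ∀ s ∈ Icc (0:ℝ) t, φ s ^ N ≤ M ^ N := by
      intro s hs
      have hsT : s ∈ Icc (0:ℝ) T := ⟨hs.1, le_trans hs.2 htT.2⟩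
      have hgs : g s ≤ 1 / C := le_trans (hmono s t hsT htT hs.2) hgt
      exact Real.rpow_le_rpow (by linarith [hφ1 s hsT]) (hφbound s hsT hgs) hN0
    have h1 := hlip (M ^ N) 0 t ⟨le_rfl, hT.le⟩ htT ht.1 hφM
    rw [hg0] at h1
    have h2 : t * M ^ N ≤ (1 / (2 * C * M ^ N)) * M ^ N :=
      mul_le_mul_of_nonneg_right (le_trans ht.2 hTsle) hMN.le
    have h3 : (1 / (2 * C * M ^ N)) * M ^ N = 1 / (2 * C) := by
      field_simp
    nlinarith [h1, h2, h3]
  -- the bootstrap set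
  set S : Set ℝ := {t | t ∈ Icc (0:ℝ) Tstar ∧ g t ≤ 1 / C} with hSdef
  have h0S : (0:ℝ) ∈ S := ⟨⟨le_rfl, hTs0.le⟩, by rw [hg0]; positivity⟩
  have hSne : S.Nonempty := ⟨0, h0S⟩
  have hSbd : BddAbove S := ⟨Tstar, fun x hx => hx.1.2⟩
  set t₁ : ℝ := sSup S with ht₁def
  have ht₁0 : 0 ≤ t₁ := le_csSup hSbd h0S
  have ht₁Ts : t₁ ≤ Tstar := csSup_le hSne (fun x hx => hx.1.2)
  have ht₁Icc : t₁ ∈ Icc (0:ℝ) Tstar := ⟨ht₁0, ht₁Ts⟩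
  have ht₁T : t₁ ∈ Icc (0:ℝ) T := hsub ht₁Icc
  -- g t₁ ≤ 1/C via an ε-argument
  have hgt₁ : g t₁ ≤ 1 / C := by
    apply le_of_forall_pos_le_add
    intro ε hε
    have hδ : 0 < ε / B ^ N := by positivity
    obtain ⟨s, hsS, hs⟩ := exists_lt_of_lt_csSup hSne (show t₁ - ε / B ^ N < t₁ by linarith)
    have hst₁ : s ≤ t₁ := le_csSup hSbd hsS
    have hsT : s ∈ Icc (0:ℝ) T := hsub hsS.1
    have h1 : g t₁ ≤ g s + (t₁ - s) * B ^ N := by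
      apply hlip (B ^ N) s t₁ hsT ht₁T hst₁
      intro u hu
      exact hφB u ⟨le_trans hsT.1 hu.1, le_trans hu.2 ht₁T.2⟩
    have h2 : (t₁ - s) * B ^ N ≤ (ε / B ^ N) * B ^ N :=
      mul_le_mul_of_nonneg_right (by linarith) hBN.le
    have h3 : (ε / B ^ N) * B ^ N = ε := div_mul_cancel₀ ε (ne_of_gt hBN)
    have h4 : g s ≤ 1 / C := hsS.2
    linarith
  -- t₁ = Tstar
  have ht₁eq : t₁ = Tstar := by
    by_contra hne
    have ht₁lt : t₁ < Tstar := lt_of_le_of_ne ht₁Ts hne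
    have hkey₁ : g t₁ ≤ 1 / (2 * C) := hkey t₁ ht₁Icc hgt₁
    set δ : ℝ := (1 / (2 * C)) / B ^ N with hδdef
    have hδpos : 0 < δ := by positivity
    set t₂ : ℝ := min Tstar (t₁ + δ) with ht₂def
    have ht₂gt : t₁ < t₂ := lt_min ht₁lt (by linarith)
    have ht₂Icc : t₂ ∈ Icc (0:ℝ) Tstar := ⟨by linarith, min_le_left _ _⟩
    have ht₂T : t₂ ∈ Icc (0:ℝ) T := hsub ht₂Icc
    have h1 : g t₂ ≤ g t₁ + (t₂ - t₁) * B ^ N := by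
      apply hlip (B ^ N) t₁ t₂ ht₁T ht₂T ht₂gt.le
      intro u hu
      exact hφB u ⟨le_trans ht₁T.1 hu.1, le_trans hu.2 ht₂T.2⟩
    have h2 : t₂ - t₁ ≤ δ := by
      have := min_le_right Tstar (t₁ + δ)
      linarith [this]
    have h3 : (t₂ - t₁) * B ^ N ≤ δ * B ^ N := mul_le_mul_of_nonneg_right h2 hBN.le
    have h4 : δ * B ^ N = 1 / (2 * C) := div_mul_cancel₀ _ (ne_of_gt hBN)
    have ht₂S : t₂ ∈ S := by
      refine ⟨ht₂Icc, ?_⟩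
      have h5 : (1:ℝ) / (2 * C) + 1 / (2 * C) = 1 / C := by
        rw [← add_div, div_eq_div_iff (by positivity) hCpos.ne']
        ring
      linarith
    have := le_csSup hSbd ht₂S
    linarith
  -- conclusion
  intro t ht
  have htT : t ∈ Icc (0:ℝ) T := hsub ht
  have hgt : g t ≤ 1 / C := by
    have := hmono t Tstar htT (hsub ⟨hTs0.le, le_rfl⟩) ht.2
    rw [← ht₁eq] at this
    exact le_trans this hgt₁
  exact hφbound t htT hgt
end
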